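/- Let 1 ≤ p ≤ h ≤ n, let v ∈ Λ_h(ℝⁿ) ∖ {0} be a simple h-vector and let β ∈ Λ^p(ℝⁿ) be such that ⟨v ⌟ α; β⟩ = 0 for all α ∈ Λ^{h−p}(ℝⁿ) (equivalently, ⟨v; α ∧ β⟩ = 0 for all α ∈ Λ^{h−p}(ℝⁿ)). Then β restricted to (span(v))^p vanishes, i.e. β(w₁, …, w_p) = 0 whenever w₁, …, w_p ∈ span(v). -/

import Mathlib

open MeasureTheory Metric Filter ENNReal Topology

noncomputable section

/-- Euclidean `n`-space. -/
abbrev Euc (n : ℕ) := EuclideanSpace ℝ (Fin n)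

/-- Coordinates of an element of the exterior algebra of `ℝⁿ` with respect to the
standard basis `{e_s : s ⊆ {1,…,n}}`.  The degree-`k` part corresponds to the
coefficients indexed by sets of cardinality `k`, i.e. to `Λ_k(ℝⁿ)` (resp. `Λ^k(ℝⁿ)`). -/
abbrev MV (n : ℕ) := Finset (Fin n) → ℝ

namespace MV

variable {n : ℕ}

/-- `v` belongs to `Λ_k(ℝⁿ)` (equivalently `Λ^k(ℝⁿ)`): only coefficients of degree `k`
are nonzero. -/
def IsGrade (k : ℕ) (v : MV n) : Prop := ∀ s : Finset (Fin n), s.card ≠ k → v s = 0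

/-- The duality pairing `⟨ζ; α⟩ := Σ_i ζ_i α_i`. -/
def pair (v w : MV n) : ℝ := ∑ s : Finset (Fin n), v s * w s

/-- The sign `(-1)^{#{(a,b) ∈ s × t : b < a}}` showing up in the wedge product of basis
elements: `e_s ∧ e_t = sign s t • e_{s ∪ t}` for disjoint `s`, `t`. -/
def sign (s t : Finset (Fin n)) : ℝ :=
  (-1 : ℝ) ^ ((s ×ˢ t).filter fun p => p.2 < p.1).card

/-- The wedge product, in coordinates. -/
def wedge (v w : MV n) : MV n :=
  fun u => ∑ s ∈ u.powerset, sign s (u \ s) * v s * w (u \ s)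

/-- The basis multivector `e_t` (resp. basis covector `dx_t`). -/
def delta (t : Finset (Fin n)) : MV n := fun s => if s = t then 1 else 0

/-- Interior multiplication `ζ ⌟ α`, characterized by `⟨ζ ⌟ α; β⟩ = ⟨ζ; α ∧ β⟩`. -/
def imul (v a : MV n) : MV n := fun t => pair v (wedge a (delta t))

/-- The canonical embedding `ℝⁿ = Λ_1(ℝⁿ) ↪ Λ_•(ℝⁿ)`. -/
def embed (x : Euc n) : MV n := fun s => ∑ i : Fin n, if s = {i} then x i else 0

/-- The canonical identification of the degree-one part of `Λ_•(ℝⁿ)` with `ℝⁿ`. -/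
def toVec (v : MV n) : Euc n := WithLp.toLp 2 (fun i => v {i})

/-- The wedge product `w 0 ∧ w 1 ∧ ⋯ ∧ w (k-1)` of a family of vectors of `ℝⁿ`. -/
def wedgeFam {k : ℕ} (w : Fin k → Euc n) : MV n :=
  (List.ofFn fun i => embed (w i)).foldr wedge (delta ∅)

/-- A `k`-vector is simple if it is a wedge product of `k` vectors of `ℝⁿ`. -/
def IsSimple (k : ℕ) (v : MV n) : Prop := ∃ w : Fin k → Euc n, v = wedgeFam w

/-- `span(v) := {v ⌟ α : α ∈ Λ^{k-1}(ℝⁿ)} ⊆ ℝⁿ`, for `v ∈ Λ_k(ℝⁿ)`. -/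
def spanSet (k : ℕ) (v : MV n) : Set (Euc n) :=
  {u | ∃ a : MV n, IsGrade (k - 1) a ∧ u = toVec (imul v a)}

/-- The (Euclidean) norm of a multivector. -/
def norm' (v : MV n) : ℝ := Real.sqrt (∑ s : Finset (Fin n), v s ^ 2)

/-- The exterior derivative of a (multi)covector field, in coordinates:
`(dψ)_u(x) = Σ_{i ∈ u} sign({i}, u \ {i}) ∂_i ψ_{u \ {i}}(x)`. -/
def extDeriv (ψ : Euc n → MV n) (x : Euc n) : MV n :=
  fun u => ∑ i ∈ u, sign {i} (u \ {i}) * fderiv ℝ ψ x (EuclideanSpace.single i 1) (u \ {i})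

end MV

/-- `x` is an `h`-superdensity point of `E` with respect to `λ`, i.e.
`λ(B_r(x) ∖ E) = λ(B_r(x))·o(r^h)` as `r → 0+`. -/
def SuperdensityPt {n : ℕ} (lam : Measure (Euc n)) (h : ℝ) (E : Set (Euc n)) (x : Euc n) :
    Prop :=
  ∀ ε > (0 : ℝ), ∃ r₀ > (0 : ℝ), ∀ r : ℝ, 0 < r → r < r₀ →
    lam (ball x r \ E) ≤ ENNReal.ofReal (ε * r ^ h) * lam (ball x r)

/-- The upper `s`-density `Θ^{*s}(μ, x) := limsup_{r→0+} μ(B_r(x))/(2r)^s`. -/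
def upperDensity {n : ℕ} (μ : Measure (Euc n)) (s : ℝ) (x : Euc n) : ℝ≥0∞ :=
  Filter.limsup (fun r : ℝ => μ (ball x r) / ENNReal.ofReal ((2 * r) ^ s)) (𝓝[>] 0)

/-- The lower `s`-density `Θ^s_*(μ, x) := liminf_{r→0+} μ(B_r(x))/(2r)^s`. -/
def lowerDensity {n : ℕ} (μ : Measure (Euc n)) (s : ℝ) (x : Euc n) : ℝ≥0∞ :=
  Filter.liminf (fun r : ℝ => μ (ball x r) / ENNReal.ofReal ((2 * r) ^ s)) (𝓝[>] 0)

/-- The upper derivative `D̄(λ, μ, x) := limsup_{r→0+} λ(B_r(x))/μ(B_r(x))`. -/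
def upperDeriv {n : ℕ} (lam μ : Measure (Euc n)) (x : Euc n) : ℝ≥0∞ :=
  Filter.limsup (fun r : ℝ => lam (ball x r) / μ (ball x r)) (𝓝[>] 0)

/-- The total variation `|τμ| = |τ|μ` of the current `T = τμ`. -/
def totalVar {n : ℕ} (τ : Euc n → MV n) (μ : Measure (Euc n)) : Measure (Euc n) :=
  μ.withDensity fun x => ENNReal.ofReal (MV.norm' (τ x))

/-- The Lebesgue-point conditions (3.2): the `μ`-averages of `τ` and of `|τ|` on `B_r(x)`
converge to `τ(x)` and `|τ(x)|` respectively, as `r → 0+`. -/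
def LebesguePt {n : ℕ} (μ : Measure (Euc n)) (τ : Euc n → MV n) (x : Euc n) : Prop :=
  Tendsto (fun r : ℝ => (μ (ball x r)).toReal⁻¹ • ∫ y in ball x r, τ y ∂μ)
    (𝓝[>] 0) (𝓝 (τ x)) ∧
  Tendsto (fun r : ℝ => (∫ y in ball x r, MV.norm' (τ y) ∂μ) / (μ (ball x r)).toReal)
    (𝓝[>] 0) (𝓝 (MV.norm' (τ x)))

/-- `K(τ, ω) := {y ∈ U : ⟨τ(y) ⌟ α; ω_y⟩ = 0 for all α ∈ Λ^{h-l}(ℝⁿ)}`, where `τ` is an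
`h`-vectorfield and `ω` a differential `l`-form on `U`. -/
def Kset {n : ℕ} (h l : ℕ) (U : Set (Euc n)) (τ : Euc n → MV n) (ω : Euc n → MV n) :
    Set (Euc n) :=
  {y ∈ U | ∀ a : MV n, MV.IsGrade (h - l) a → MV.pair (MV.imul (τ y) a) (ω y) = 0}

/-- `T = τμ` is a normal `h`-current on `Ω` with `∂T = τ'μ'` : both measures are finite,
`τ, τ'` are Borel and integrable, take values in `Λ_h` resp. `Λ_{h-1}`, and
`∫ ⟨τ'; ψ⟩ dμ' = ∫ ⟨τ; dψ⟩ dμ` for every smooth compactly supported `(h-1)`-form `ψ` on `Ω`. -/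
def IsNormalPair {n : ℕ} (h : ℕ) (Ω : Set (Euc n)) (μ μ' : Measure (Euc n))
    (τ τ' : Euc n → MV n) : Prop :=
  IsFiniteMeasure μ ∧ IsFiniteMeasure μ' ∧
  Measurable τ ∧ Measurable τ' ∧
  Integrable τ μ ∧ Integrable τ' μ' ∧
  (∀ x, MV.IsGrade h (τ x)) ∧ (∀ x, MV.IsGrade (h - 1) (τ' x)) ∧
  ∀ ψ : Euc n → MV n, ContDiff ℝ (⊤ : ℕ∞) ψ → HasCompactSupport ψ → tsupport ψ ⊆ Ω →
    (∀ y, MV.IsGrade (h - 1) (ψ y)) →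
    ∫ y, MV.pair (τ' y) (ψ y) ∂μ' = ∫ y, MV.pair (τ y) (MV.extDeriv ψ y) ∂μ

/-- `D` is a `k`-distribution of class `C^p` on `Ω`: each `D(x)` is a `k`-dimensional
subspace and, locally, `D` is the intersection of the kernels of `n - k` differential
1-forms of class `C^p` (the defining forms). -/
def IsDistribution {n : ℕ} (p : ℕ∞) (k : ℕ) (Ω : Set (Euc n))
    (D : Euc n → Submodule ℝ (Euc n)) : Prop :=
  (∀ x ∈ Ω, Module.finrank ℝ (D x) = k) ∧
  ∀ x ∈ Ω, ∃ U : Set (Euc n), U ⊆ Ω ∧ IsOpen U ∧ x ∈ U ∧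
    ∃ ω : Fin (n - k) → Euc n → (Euc n →L[ℝ] ℝ),
      (∀ j, ContDiffOn ℝ p (ω j) U) ∧
      ∀ y ∈ U, D y = ⨅ j, LinearMap.ker (ω j y : Euc n →ₗ[ℝ] ℝ)

/-- The tangency set `Γ(τ, D) := {x ∈ Ω : span(τ(x)) ⊆ D(x)}` of a `k`-vectorfield `τ`
with respect to a distribution `D`. -/
def tangencySet {n : ℕ} (k : ℕ) (Ω : Set (Euc n)) (τ : Euc n → MV n)
    (D : Euc n → Submodule ℝ (Euc n)) : Set (Euc n) :=
  {x ∈ Ω | MV.spanSet k (τ x) ⊆ (D x : Set (Euc n))}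

/-- A `C¹` `k`-distribution `D` is involutive at `x`: for some family of `C¹` defining
forms `ω⁽¹⁾, …, ω⁽ⁿ⁻ᵏ⁾` near `x`, each `(dω⁽ʲ⁾)_x` vanishes on `D(x) × D(x)`;
here `(dω)_x(u, v) = (Dω_x u)(v) − (Dω_x v)(u)`. -/
def InvolutiveAt {n : ℕ} (k : ℕ) (Ω : Set (Euc n)) (D : Euc n → Submodule ℝ (Euc n))
    (x : Euc n) : Prop :=
  ∃ U : Set (Euc n), U ⊆ Ω ∧ IsOpen U ∧ x ∈ U ∧
    ∃ ω : Fin (n - k) → Euc n → (Euc n →L[ℝ] ℝ),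
      (∀ j, ContDiffOn ℝ 1 (ω j) U) ∧
      (∀ y ∈ U, D y = ⨅ j, LinearMap.ker (ω j y : Euc n →ₗ[ℝ] ℝ)) ∧
      ∀ j, ∀ u ∈ D x, ∀ v ∈ D x, fderiv ℝ (ω j) x u v = fderiv ℝ (ω j) x v u

/-! Write `v = u₁ ∧ ⋯ ∧ u_h`. A vector `z` orthogonal to every `uⱼ` contracts `v` to `0`, hence is
orthogonal to every `v ⌟ α`; so `span(v) ⊆ span{u₁, …, u_h}` and `x ∧ v = 0` for `x ∈ span(v)`.
Coordinates identify `k`-vectors with `k`-covectors, so `β ⌟ x` makes sense for the covector `β`,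
and `⟨x ∧ w; β⟩ = ⟨w; β ⌟ x⟩`. Because `⌟ x` is an antiderivation and `⟨v; (α ∧ β) ⌟ x⟩ =
⟨x ∧ v; α ∧ β⟩ = 0`, the hypothesis on `β` passes to `β ⌟ x` one degree lower. Peeling off
`w₁, …, w_p` this way reduces the claim to `p = 1`, where `w₁ = v ⌟ α` and the hypothesis applies
directly. -/

namespace MV

variable {n : ℕ}

lemma pair_comm (v w : MV n) : pair v w = pair w v := dotProduct_comm v w

lemma pair_zero_right (v : MV n) : pair v 0 = 0 := dotProduct_zero v

lemma pair_smul_left (c : ℝ) (v w : MV n) : pair (c • v) w = c * pair v w :=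
  smul_dotProduct c v w

lemma pair_smul_right (c : ℝ) (v w : MV n) : pair v (c • w) = c * pair v w :=
  dotProduct_smul c v w

lemma pair_sub_right (u v w : MV n) : pair u (v - w) = pair u v - pair u w :=
  dotProduct_sub u v w

lemma pair_sum_left {ι : Type*} (I : Finset ι) (f : ι → MV n) (w : MV n) :
    pair (∑ i ∈ I, f i) w = ∑ i ∈ I, pair (f i) w :=
  sum_dotProduct I f w

lemma pair_sum_right {ι : Type*} (I : Finset ι) (v : MV n) (f : ι → MV n) :
    pair v (∑ i ∈ I, f i) = ∑ i ∈ I, pair v (f i) :=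
  dotProduct_sum v I f

lemma pair_delta_left (t : Finset (Fin n)) (v : MV n) : pair (delta t) v = v t := by
  simp [pair, delta]

lemma sum_smul_delta (v : MV n) : ∑ t, v t • delta t = v := by
  funext s
  simp [delta, Finset.sum_apply]

lemma wedge_add_left (a b c : MV n) : wedge (a + b) c = wedge a c + wedge b c := by
  funext u
  simp only [wedge, Pi.add_apply, ← Finset.sum_add_distrib]
  exact Finset.sum_congr rfl fun s _ => by ring

lemma wedge_smul_left (c : ℝ) (a b : MV n) : wedge (c • a) b = c • wedge a b := by
  funext u
  simp only [wedge, Pi.smul_apply, smul_eq_mul, Finset.mul_sum]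
  exact Finset.sum_congr rfl fun s _ => by ring

lemma wedge_smul_right (c : ℝ) (a b : MV n) : wedge a (c • b) = c • wedge a b := by
  funext u
  simp only [wedge, Pi.smul_apply, smul_eq_mul, Finset.mul_sum]
  exact Finset.sum_congr rfl fun s _ => by ring

lemma wedge_zero_left (b : MV n) : wedge 0 b = 0 := by
  simpa using wedge_smul_left 0 0 b

lemma wedge_zero_right (a : MV n) : wedge a 0 = 0 := by
  simpa using wedge_smul_right 0 a 0

lemma wedge_sum_left {ι : Type*} (I : Finset ι) (f : ι → MV n) (b : MV n) :
    wedge (∑ i ∈ I, f i) b = ∑ i ∈ I, wedge (f i) b := by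
  funext u
  simp only [wedge, Finset.sum_apply, Finset.mul_sum, Finset.sum_mul]
  exact Finset.sum_comm

lemma wedge_sum_right {ι : Type*} (I : Finset ι) (a : MV n) (f : ι → MV n) :
    wedge a (∑ i ∈ I, f i) = ∑ i ∈ I, wedge a (f i) := by
  funext u
  simp only [wedge, Finset.sum_apply, Finset.mul_sum]
  exact Finset.sum_comm

lemma imul_smul_left (c : ℝ) (γ a : MV n) : imul (c • γ) a = c • imul γ a := by
  funext t
  exact pair_smul_left c γ _

lemma imul_zero_left (a : MV n) : imul 0 a = 0 := by
  simpa using imul_smul_left 0 0 a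

lemma imul_smul_right (c : ℝ) (γ a : MV n) : imul γ (c • a) = c • imul γ a := by
  funext t
  simp only [imul, wedge_smul_left, pair_smul_right, Pi.smul_apply, smul_eq_mul]

lemma imul_sum_left {ι : Type*} (I : Finset ι) (f : ι → MV n) (a : MV n) :
    imul (∑ i ∈ I, f i) a = ∑ i ∈ I, imul (f i) a := by
  funext t
  simp only [imul, pair_sum_left, Finset.sum_apply]

lemma imul_sum_right {ι : Type*} (I : Finset ι) (γ : MV n) (f : ι → MV n) :
    imul γ (∑ i ∈ I, f i) = ∑ i ∈ I, imul γ (f i) := by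
  funext t
  simp only [imul, wedge_sum_left, pair_sum_right, Finset.sum_apply]

lemma pair_imul_left (v a b : MV n) : pair (imul v a) b = pair v (wedge a b) := by
  show ∑ t, pair v (wedge a (delta t)) * b t = _
  conv_rhs => rw [← sum_smul_delta b, wedge_sum_right, pair_sum_right]
  simp only [wedge_smul_right, pair_smul_right]
  exact Finset.sum_congr rfl fun t _ => mul_comm _ _

lemma sign_empty_right (s : Finset (Fin n)) : sign s ∅ = 1 := by
  simp [sign]

lemma sign_mul_self (s t : Finset (Fin n)) : sign s t * sign s t = 1 := by
  rw [sign, ← mul_pow]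
  norm_num

lemma sign_union_left {s t : Finset (Fin n)} (h : Disjoint s t) (r : Finset (Fin n)) :
    sign (s ∪ t) r = sign s r * sign t r := by
  rw [sign, sign, sign, ← pow_add, Finset.union_product, Finset.filter_union,
    Finset.card_union_of_disjoint]
  exact Finset.disjoint_filter_filter (Finset.disjoint_product.2 (Or.inl h))

lemma sign_union_right (s : Finset (Fin n)) {t r : Finset (Fin n)} (h : Disjoint t r) :
    sign s (t ∪ r) = sign s t * sign s r := by
  rw [sign, sign, sign, ← pow_add, Finset.product_union, Finset.filter_union,
    Finset.card_union_of_disjoint]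
  exact Finset.disjoint_filter_filter (Finset.disjoint_product.2 (Or.inr h))

lemma sign_insert_left {m : Fin n} {s : Finset (Fin n)} (hm : m ∉ s) (t : Finset (Fin n)) :
    sign (insert m s) t = sign {m} t * sign s t := by
  rw [Finset.insert_eq, sign_union_left (Finset.disjoint_singleton_left.2 hm)]

lemma sign_insert_right (s : Finset (Fin n)) {m : Fin n} {t : Finset (Fin n)} (hm : m ∉ t) :
    sign s (insert m t) = sign s {m} * sign s t := by
  rw [Finset.insert_eq, sign_union_right s (Finset.disjoint_singleton_left.2 hm)]

/-- Each pair of `s × t` is inverted either in `(s, t)` or in `(t, s)`. -/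
lemma sign_mul_sign_of_disjoint {s t : Finset (Fin n)} (h : Disjoint s t) :
    sign s t * sign t s = (-1 : ℝ) ^ (s.card * t.card) := by
  have hswap : ((t ×ˢ s).filter fun p => p.2 < p.1).card
      = ((s ×ˢ t).filter fun p => ¬ p.2 < p.1).card := by
    refine Finset.card_bij' (fun p _ => p.swap) (fun p _ => p.swap) ?_ ?_ (by simp) (by simp)
    · intro p hp
      simp only [Finset.mem_filter, Finset.mem_product, Prod.fst_swap, Prod.snd_swap] at hp ⊢
      exact ⟨⟨hp.1.2, hp.1.1⟩, hp.2.not_gt⟩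
    · intro p hp
      simp only [Finset.mem_filter, Finset.mem_product, Prod.fst_swap, Prod.snd_swap] at hp ⊢
      refine ⟨⟨hp.1.2, hp.1.1⟩, (not_lt.1 hp.2).lt_of_ne fun he => ?_⟩
      exact Finset.disjoint_left.1 h hp.1.1 (he ▸ hp.1.2)
  rw [sign, sign, ← pow_add, hswap, Finset.card_filter_add_card_filter_not,
    Finset.card_product]

lemma wedge_delta_delta (s t : Finset (Fin n)) :
    wedge (delta s) (delta t) = if Disjoint s t then sign s t • delta (s ∪ t) else 0 := by
  funext u
  have hsum : wedge (delta s) (delta t) u = if s ⊆ u ∧ u \ s = t then sign s t else 0 := by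
    simp only [wedge, delta, mul_ite, mul_one, mul_zero]
    by_cases hsu : s ⊆ u
    · rw [Finset.sum_eq_single_of_mem s (Finset.mem_powerset.2 hsu) fun r _ hr => by simp [hr]]
      by_cases hst : u \ s = t <;> simp [hsu, hst]
    · refine (Finset.sum_eq_zero fun r hr => ?_).trans (by simp [hsu])
      have : r ≠ s := fun h => hsu (h ▸ Finset.mem_powerset.1 hr)
      simp [this]
  rw [hsum]
  by_cases hd : Disjoint s t
  · have key : s ⊆ u ∧ u \ s = t ↔ u = s ∪ t := by
      constructor
      · rintro ⟨hsu, rfl⟩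
        exact (Finset.union_sdiff_of_subset hsu).symm
      · rintro rfl
        exact ⟨Finset.subset_union_left, Finset.union_sdiff_cancel_left hd⟩
    simp only [hd, key, if_true, Pi.smul_apply, delta, smul_eq_mul, mul_ite, mul_one, mul_zero]
  · have : ¬ (s ⊆ u ∧ u \ s = t) := by
      rintro ⟨-, rfl⟩
      exact hd Finset.disjoint_sdiff
    simp [hd, this]

lemma wedge_delta_empty (a : MV n) : wedge a (delta ∅) = a := by
  conv_lhs => rw [← sum_smul_delta a, wedge_sum_left]
  simp only [wedge_smul_left, wedge_delta_delta, Finset.disjoint_empty_right, if_true,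
    sign_empty_right, one_smul, Finset.union_empty]
  exact sum_smul_delta a

lemma isGrade_delta (t : Finset (Fin n)) : IsGrade t.card (delta t) := by
  intro s hs
  simp only [delta, ite_eq_right_iff, one_ne_zero, imp_false]
  exact fun h => hs (h ▸ rfl)

lemma isGrade_wedge {k l : ℕ} {a b : MV n} (ha : IsGrade k a) (hb : IsGrade l b) :
    IsGrade (k + l) (wedge a b) := by
  intro u hu
  refine Finset.sum_eq_zero fun s hs => ?_
  have hcard := Finset.card_sdiff_add_card_eq_card (Finset.mem_powerset.1 hs)
  by_cases hs : s.card = k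
  · rw [hb _ (by omega), mul_zero]
  · rw [ha _ hs, mul_zero, zero_mul]

lemma pair_eq_zero_of_isGrade {k l : ℕ} {a b : MV n} (ha : IsGrade k a) (hb : IsGrade l b)
    (hkl : k ≠ l) : pair a b = 0 := by
  refine Finset.sum_eq_zero fun s _ => ?_
  by_cases hs : s.card = k
  · rw [hb s (by omega), mul_zero]
  · rw [ha s hs, zero_mul]

lemma wedge_comm {k l : ℕ} {a b : MV n} (ha : IsGrade k a) (hb : IsGrade l b) :
    wedge a b = (-1 : ℝ) ^ (k * l) • wedge b a := by
  funext u
  rw [Pi.smul_apply, smul_eq_mul, wedge, wedge, Finset.mul_sum]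
  refine Finset.sum_nbij' (u \ ·) (u \ ·) (by simp) (by simp)
    (fun s hs => Finset.sdiff_sdiff_eq_self (Finset.mem_powerset.1 hs))
    (fun s hs => Finset.sdiff_sdiff_eq_self (Finset.mem_powerset.1 hs)) fun s hs => ?_
  rw [Finset.sdiff_sdiff_eq_self (Finset.mem_powerset.1 hs)]
  by_cases hs : s.card = k
  · by_cases ht : (u \ s).card = l
    · have hcomm := sign_mul_sign_of_disjoint (Finset.disjoint_sdiff (s := s) (t := u))
      have hsq := sign_mul_self (u \ s) s
      rw [hs, ht] at hcomm
      linear_combination (a s * b (u \ s)) * (sign (u \ s) s * hcomm - sign s (u \ s) * hsq)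
    · rw [hb _ ht]
      ring
  · rw [ha s hs]
    ring

lemma wedge_assoc_delta (s t r : Finset (Fin n)) :
    wedge (wedge (delta s) (delta t)) (delta r) = wedge (delta s) (wedge (delta t) (delta r)) := by
  by_cases hall : Disjoint s t ∧ Disjoint t r ∧ Disjoint s r
  · obtain ⟨hst, htr, hsr⟩ := hall
    simp only [wedge_delta_delta, hst, htr, Finset.disjoint_union_left,
      Finset.disjoint_union_right, hsr, and_self, if_true, wedge_smul_left, wedge_smul_right,
      smul_smul, sign_union_left hst, sign_union_right s htr, Finset.union_assoc]
    congr 1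
    ring
  · have hL : wedge (wedge (delta s) (delta t)) (delta r) = 0 := by
      rw [wedge_delta_delta s t]
      split_ifs with hst
      · rw [wedge_smul_left, wedge_delta_delta, if_neg, smul_zero]
        rw [Finset.disjoint_union_left]
        tauto
      · exact wedge_zero_left _
    have hR : wedge (delta s) (wedge (delta t) (delta r)) = 0 := by
      rw [wedge_delta_delta t r]
      split_ifs with htr
      · rw [wedge_smul_right, wedge_delta_delta, if_neg, smul_zero]
        rw [Finset.disjoint_union_right]
        tauto
      · exact wedge_zero_right _
    rw [hL, hR]

lemma wedge_assoc (a b c : MV n) : wedge (wedge a b) c = wedge a (wedge b c) := by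
  rw [← sum_smul_delta a, ← sum_smul_delta b, ← sum_smul_delta c]
  simp only [wedge_sum_left, wedge_sum_right, wedge_smul_left, wedge_smul_right,
    wedge_assoc_delta]

lemma isGrade_imul {k l : ℕ} {γ a : MV n} (hγ : IsGrade k γ) (ha : IsGrade l a) :
    IsGrade (k - l) (imul γ a) := fun t ht =>
  pair_eq_zero_of_isGrade hγ (isGrade_wedge ha (isGrade_delta t)) (by omega)

lemma imul_delta_insert {m : Fin n} {s : Finset (Fin n)} (hm : m ∉ s) :
    imul (delta (insert m s)) (delta {m}) = sign {m} s • delta s := by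
  funext t
  simp only [imul, pair_delta_left, wedge_delta_delta, Finset.disjoint_singleton_left,
    ← Finset.insert_eq]
  by_cases hmt : m ∈ t
  · have : t ≠ s := fun h => hm (h ▸ hmt)
    simp [hmt, delta, this]
  · have : insert m s = insert m t ↔ t = s :=
      ⟨fun h => by rw [← Finset.erase_insert hm, h, Finset.erase_insert hmt], fun h => h ▸ rfl⟩
    by_cases hts : t = s
    · simp [hm, delta, hts]
    · simp [hmt, delta, hts, this]

lemma imul_delta_of_notMem {m : Fin n} {u : Finset (Fin n)} (hm : m ∉ u) :
    imul (delta u) (delta {m}) = 0 := by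
  funext t
  simp only [imul, pair_delta_left, wedge_delta_delta, ← Finset.insert_eq]
  split_ifs
  · have : u ≠ insert m t := fun h => hm (h ▸ Finset.mem_insert_self m t)
    simp [delta, this]
  · rfl

def gradeInv : MV n →ₗ[ℝ] MV n where
  toFun a s := (-1) ^ s.card * a s
  map_add' a b := by
    funext s
    simp [mul_add]
  map_smul' c a := by
    funext s
    simp [mul_left_comm]

lemma gradeInv_delta (s : Finset (Fin n)) : gradeInv (delta s) = (-1 : ℝ) ^ s.card • delta s := by
  funext t
  by_cases h : t = s <;> simp [gradeInv, delta, h]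

lemma gradeInv_of_isGrade {k : ℕ} {a : MV n} (ha : IsGrade k a) :
    gradeInv a = (-1 : ℝ) ^ k • a := by
  funext s
  by_cases hs : s.card = k
  · simp [gradeInv, hs]
  · simp [gradeInv, ha s hs]

lemma imul_wedge_delta_insert_left {m : Fin n} {s t : Finset (Fin n)} (hms : m ∉ s)
    (hmt : m ∉ t) :
    imul (wedge (delta (insert m s)) (delta t)) (delta {m})
      = sign {m} s • wedge (delta s) (delta t) := by
  by_cases hd : Disjoint s t
  · have hmst : m ∉ s ∪ t := by simp [hms, hmt]
    simp only [wedge_delta_delta, Finset.disjoint_insert_left, hmt, hd, not_false_eq_true,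
      and_self, if_true, Finset.insert_union, imul_smul_left, imul_delta_insert hmst, smul_smul,
      sign_insert_left hms, sign_union_right _ hd]
    congr 1
    linear_combination sign {m} s * sign s t * sign_mul_self {m} t
  · simp [wedge_delta_delta, hd, imul_zero_left]

lemma imul_wedge_delta_insert_right {m : Fin n} {s t : Finset (Fin n)} (hms : m ∉ s)
    (hmt : m ∉ t) :
    imul (wedge (delta s) (delta (insert m t))) (delta {m})
      = ((-1 : ℝ) ^ s.card * sign {m} t) • wedge (delta s) (delta t) := by
  by_cases hd : Disjoint s t
  · have hmst : m ∉ s ∪ t := by simp [hms, hmt]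
    simp only [wedge_delta_delta, Finset.disjoint_insert_right, hms, hd, not_false_eq_true,
      and_self, if_true, Finset.union_insert, imul_smul_left, imul_delta_insert hmst, smul_smul,
      sign_insert_right s hmt, sign_union_right _ hd]
    congr 1
    have hcomm := sign_mul_sign_of_disjoint (Finset.disjoint_singleton_right.2 hms)
    rw [Finset.card_singleton, mul_one] at hcomm
    linear_combination sign {m} t * sign s t * hcomm
  · simp [wedge_delta_delta, hd, imul_zero_left]

lemma imul_wedge_delta_of_notMem {m : Fin n} {s t : Finset (Fin n)} (hms : m ∉ s)
    (hmt : m ∉ t) : imul (wedge (delta s) (delta t)) (delta {m}) = 0 := by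
  have hmst : m ∉ s ∪ t := by simp [hms, hmt]
  by_cases hd : Disjoint s t <;>
    simp [wedge_delta_delta, hd, imul_smul_left, imul_zero_left, imul_delta_of_notMem hmst]

lemma wedge_delta_insert_comm {m : Fin n} {s t : Finset (Fin n)} (hms : m ∉ s) (hmt : m ∉ t) :
    sign {m} s • wedge (delta s) (delta (insert m t))
      = ((-1 : ℝ) ^ s.card * sign {m} t) • wedge (delta (insert m s)) (delta t) := by
  by_cases hd : Disjoint s t
  · simp only [wedge_delta_delta, Finset.disjoint_insert_right, Finset.disjoint_insert_left,
      hms, hmt, hd, not_false_eq_true, and_self, if_true, Finset.union_insert,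
      Finset.insert_union, smul_smul, sign_insert_right s hmt, sign_insert_left hms]
    congr 1
    have hcomm := sign_mul_sign_of_disjoint (Finset.disjoint_singleton_right.2 hms)
    rw [Finset.card_singleton, mul_one] at hcomm
    linear_combination sign s t * hcomm - (-1 : ℝ) ^ s.card * sign s t * sign_mul_self {m} t
  · simp [wedge_delta_delta, hd]

lemma imul_wedge_delta_delta (s t : Finset (Fin n)) (m : Fin n) :
    imul (wedge (delta s) (delta t)) (delta {m})
      = wedge (imul (delta s) (delta {m})) (delta t)
        + wedge (gradeInv (delta s)) (imul (delta t) (delta {m})) := by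
  rw [gradeInv_delta, wedge_smul_left]
  by_cases hms : m ∈ s <;> by_cases hmt : m ∈ t
  · obtain ⟨s, hms', rfl⟩ : ∃ s', m ∉ s' ∧ s = insert m s' :=
      ⟨s.erase m, Finset.notMem_erase m s, (Finset.insert_erase hms).symm⟩
    obtain ⟨t, hmt', rfl⟩ : ∃ t', m ∉ t' ∧ t = insert m t' :=
      ⟨t.erase m, Finset.notMem_erase m t, (Finset.insert_erase hmt).symm⟩
    have hd : ¬ Disjoint (insert m s) (insert m t) :=
      Finset.not_disjoint_iff.2 ⟨m, Finset.mem_insert_self m s, Finset.mem_insert_self m t⟩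
    rw [wedge_delta_delta, if_neg hd, imul_zero_left, imul_delta_insert hms',
      imul_delta_insert hmt', wedge_smul_left, wedge_smul_right, wedge_delta_insert_comm hms' hmt',
      Finset.card_insert_of_notMem hms', smul_smul, ← add_smul, pow_succ]
    simp
  · obtain ⟨s, hms', rfl⟩ : ∃ s', m ∉ s' ∧ s = insert m s' :=
      ⟨s.erase m, Finset.notMem_erase m s, (Finset.insert_erase hms).symm⟩
    rw [imul_wedge_delta_insert_left hms' hmt, imul_delta_insert hms', imul_delta_of_notMem hmt,
      wedge_smul_left, wedge_zero_right, smul_zero, add_zero]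
  · obtain ⟨t, hmt', rfl⟩ : ∃ t', m ∉ t' ∧ t = insert m t' :=
      ⟨t.erase m, Finset.notMem_erase m t, (Finset.insert_erase hmt).symm⟩
    rw [imul_wedge_delta_insert_right hms hmt', imul_delta_of_notMem hms, imul_delta_insert hmt',
      wedge_zero_left, zero_add, wedge_smul_right, smul_smul]
  · rw [imul_wedge_delta_of_notMem hms hmt, imul_delta_of_notMem hms, imul_delta_of_notMem hmt,
      wedge_zero_left, wedge_zero_right, smul_zero, add_zero]

lemma imul_wedge_delta_singleton (a b : MV n) (m : Fin n) :
    imul (wedge a b) (delta {m})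
      = wedge (imul a (delta {m})) b + wedge (gradeInv a) (imul b (delta {m})) := by
  rw [← sum_smul_delta a, ← sum_smul_delta b]
  simp only [wedge_sum_left, wedge_sum_right, imul_sum_left, map_sum, map_smul, wedge_smul_left,
    wedge_smul_right, imul_smul_left, imul_wedge_delta_delta, smul_add, Finset.sum_add_distrib]

open scoped RealInnerProductSpace

lemma embed_eq_sum (x : Euc n) : embed x = ∑ i, x i • delta {i} := by
  funext s
  simp only [embed, delta, Finset.sum_apply, Pi.smul_apply, smul_eq_mul, mul_ite, mul_one,
    mul_zero]

lemma embed_apply_singleton (x : Euc n) (i : Fin n) : embed x {i} = x i := by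
  simp [embed]

lemma embed_zero : embed (0 : Euc n) = 0 := by
  simp [embed_eq_sum]

lemma embed_add (x y : Euc n) : embed (x + y) = embed x + embed y := by
  simp [embed_eq_sum, add_smul, Finset.sum_add_distrib]

lemma embed_smul (c : ℝ) (x : Euc n) : embed (c • x) = c • embed x := by
  simp [embed_eq_sum, Finset.smul_sum, smul_smul]

lemma isGrade_embed (x : Euc n) : IsGrade 1 (embed x) := by
  intro s hs
  refine Finset.sum_eq_zero fun i _ => if_neg ?_
  rintro rfl
  exact hs (Finset.card_singleton i)

lemma embed_toVec {γ : MV n} (hγ : IsGrade 1 γ) : embed (toVec γ) = γ := by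
  funext s
  by_cases hs : s.card = 1
  · obtain ⟨i, rfl⟩ := Finset.card_eq_one.1 hs
    exact embed_apply_singleton _ i
  · rw [isGrade_embed _ s hs, hγ s hs]

lemma pair_embed_left (x : Euc n) (γ : MV n) : pair (embed x) γ = ∑ i, x i * γ {i} := by
  simp [embed_eq_sum, pair_sum_left, pair_smul_left, pair_delta_left]

lemma inner_toVec (x : Euc n) (γ : MV n) : ⟪x, toVec γ⟫ = pair (embed x) γ := by
  simp [pair_embed_left, toVec, PiLp.inner_apply, mul_comm]

lemma imul_embed_embed (x y : Euc n) : imul (embed x) (embed y) = ⟪x, y⟫ • delta ∅ := by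
  funext t
  by_cases ht : t = ∅
  · subst ht
    simp [imul, wedge_delta_empty, delta, pair_embed_left, embed_apply_singleton,
      PiLp.inner_apply, mul_comm]
  · have hgrade := isGrade_wedge (isGrade_embed y) (isGrade_delta t)
    rw [imul, pair_eq_zero_of_isGrade (isGrade_embed x) hgrade
      (by simpa [Finset.card_eq_zero] using ht)]
    simp [delta, ht]

lemma imul_wedge_embed (a b : MV n) (x : Euc n) :
    imul (wedge a b) (embed x)
      = wedge (imul a (embed x)) b + wedge (gradeInv a) (imul b (embed x)) := by
  simp only [embed_eq_sum, imul_sum_right, imul_smul_right, imul_wedge_delta_singleton,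
    wedge_sum_left, wedge_sum_right, wedge_smul_left, wedge_smul_right, smul_add,
    Finset.sum_add_distrib]

lemma wedgeFam_succ {k : ℕ} (w : Fin (k + 1) → Euc n) :
    wedgeFam w = wedge (embed (w 0)) (wedgeFam fun i => w i.succ) := by
  simp only [wedgeFam, List.ofFn_succ, List.foldr_cons]

lemma wedgeFam_one (w : Fin 1 → Euc n) : wedgeFam w = embed (w 0) := by
  rw [wedgeFam_succ, wedgeFam, List.ofFn_zero, List.foldr_nil, wedge_delta_empty]

lemma embed_wedge_embed_comm (x y : Euc n) :
    wedge (embed x) (embed y) = (-1 : ℝ) • wedge (embed y) (embed x) := by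
  simpa using wedge_comm (isGrade_embed x) (isGrade_embed y)

lemma embed_wedge_self (x : Euc n) : wedge (embed x) (embed x) = 0 := by
  funext s
  have h := congrFun (embed_wedge_embed_comm x x) s
  simp only [Pi.smul_apply, smul_eq_mul, neg_one_mul] at h
  simpa using CharZero.eq_neg_self_iff.1 h

lemma embed_wedge_wedgeFam_self {k : ℕ} (u : Fin k → Euc n) (j : Fin k) :
    wedge (embed (u j)) (wedgeFam u) = 0 := by
  induction k with
  | zero => exact j.elim0
  | succ k ih =>
    rw [wedgeFam_succ, ← wedge_assoc]
    cases j using Fin.cases with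
    | zero => rw [embed_wedge_self, wedge_zero_left]
    | succ j => rw [embed_wedge_embed_comm, wedge_smul_left, wedge_assoc, ih (fun i => u i.succ) j,
        wedge_zero_right, smul_zero]

lemma embed_wedge_wedgeFam_of_mem_span {k : ℕ} (u : Fin k → Euc n) {x : Euc n}
    (hx : x ∈ Submodule.span ℝ (Set.range u)) : wedge (embed x) (wedgeFam u) = 0 := by
  induction hx using Submodule.span_induction with
  | mem x hx =>
    obtain ⟨j, rfl⟩ := hx
    exact embed_wedge_wedgeFam_self u j
  | zero => rw [embed_zero, wedge_zero_left]
  | add x y _ _ hx hy => rw [embed_add, wedge_add_left, hx, hy, add_zero]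
  | smul c x _ hx => rw [embed_smul, wedge_smul_left, hx, smul_zero]

lemma imul_wedgeFam_embed_of_orthogonal {k : ℕ} (u : Fin k → Euc n) {z : Euc n}
    (hz : ∀ j, ⟪u j, z⟫ = 0) : imul (wedgeFam u) (embed z) = 0 := by
  induction k with
  | zero =>
    funext t
    exact (pair_delta_left ∅ _).trans
      (isGrade_wedge (isGrade_embed z) (isGrade_delta t) ∅ (by rw [Finset.card_empty]; omega))
  | succ k ih =>
    rw [wedgeFam_succ, imul_wedge_embed, imul_embed_embed, hz 0, zero_smul, wedge_zero_left,
      ih _ fun j => hz j.succ, wedge_zero_right, zero_add]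

lemma spanSet_wedgeFam_subset {k h : ℕ} (u : Fin k → Euc n) :
    spanSet h (wedgeFam u) ⊆ Submodule.span ℝ (Set.range u) := by
  rintro _ ⟨a, ha, rfl⟩
  rw [← (Submodule.span ℝ (Set.range u)).orthogonal_orthogonal]
  refine (Submodule.mem_orthogonal _ _).2 fun z hz => ?_
  have hzu : ∀ j, ⟪u j, z⟫ = 0 := fun j =>
    (Submodule.mem_orthogonal _ z).1 hz (u j) (Submodule.subset_span (Set.mem_range_self j))
  calc ⟪z, toVec (imul (wedgeFam u) a)⟫
      = pair (wedgeFam u) (wedge a (embed z)) := by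
        rw [inner_toVec, pair_comm, pair_imul_left]
    _ = (-1 : ℝ) ^ ((h - 1) * 1) * pair (imul (wedgeFam u) (embed z)) a := by
        rw [wedge_comm ha (isGrade_embed z), pair_smul_right, pair_imul_left]
    _ = 0 := by
        rw [imul_wedgeFam_embed_of_orthogonal u hzu, pair_comm, pair_zero_right, mul_zero]

lemma IsSimple.embed_wedge_eq_zero {h : ℕ} {v : MV n} (hv : IsSimple h v) {x : Euc n}
    (hx : x ∈ spanSet h v) : wedge (embed x) v = 0 := by
  obtain ⟨u, rfl⟩ := hv
  exact embed_wedge_wedgeFam_of_mem_span u (spanSet_wedgeFam_subset u hx)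

lemma pair_wedge_imul_embed_eq_zero {v β : MV n} {x : Euc n} (hx : wedge (embed x) v = 0)
    {k : ℕ} (hβ : ∀ a : MV n, IsGrade (k - 1) a → pair v (wedge a β) = 0)
    {a : MV n} (ha : IsGrade k a) : pair v (wedge a (imul β (embed x))) = 0 := by
  have hsplit := imul_wedge_embed a β x
  rw [gradeInv_of_isGrade ha, wedge_smul_left] at hsplit
  have hprod : pair v (imul (wedge a β) (embed x)) = 0 := by
    rw [pair_comm, pair_imul_left, hx, pair_zero_right]
  have hsign := congrArg (pair v) (eq_sub_of_add_eq' hsplit.symm)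
  rw [pair_smul_right, pair_sub_right, hprod, hβ _ (isGrade_imul ha (isGrade_embed x)),
    sub_zero] at hsign
  exact (mul_eq_zero.1 hsign).resolve_left (pow_ne_zero _ (by norm_num))

lemma pair_embed_eq_zero_of_mem_spanSet {h : ℕ} {v β : MV n} (hv : IsGrade h v) (hh : 1 ≤ h)
    (hβ : ∀ a : MV n, IsGrade (h - 1) a → pair v (wedge a β) = 0) {x : Euc n}
    (hx : x ∈ spanSet h v) : pair (embed x) β = 0 := by
  obtain ⟨a, ha, rfl⟩ := hx
  have hgrade : IsGrade 1 (imul v a) := by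
    simpa [show h - (h - 1) = 1 by omega] using isGrade_imul hv ha
  rw [embed_toVec hgrade, pair_imul_left]
  exact hβ a ha

lemma pair_wedgeFam_eq_zero {h : ℕ} {v : MV n} (hv : IsGrade h v) (hh : 1 ≤ h)
    (hann : ∀ x ∈ spanSet h v, wedge (embed x) v = 0) {q : ℕ} {β : MV n}
    (hβ : ∀ a : MV n, IsGrade (h - (q + 1)) a → pair v (wedge a β) = 0)
    (w : Fin (q + 1) → Euc n) (hw : ∀ i, w i ∈ spanSet h v) : pair (wedgeFam w) β = 0 := by
  induction q generalizing β with
  | zero =>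
    rw [wedgeFam_one]
    exact pair_embed_eq_zero_of_mem_spanSet hv hh hβ (hw 0)
  | succ q ih =>
    rw [wedgeFam_succ, pair_comm, ← pair_imul_left, pair_comm]
    refine ih (fun a ha => pair_wedge_imul_embed_eq_zero (hann _ (hw 0)) ?_ ha) _
      fun i => hw i.succ
    simpa [show h - (q + 1) - 1 = h - (q + 1 + 1) by omega] using hβ

end MV

theorem statement1_general {n h p : ℕ} (hp : 1 ≤ p) (hph : p ≤ h)
    (v : MV n) (hgv : MV.IsGrade h v) (hsimple : MV.IsSimple h v)
    (β : MV n)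
    (hyp : ∀ a : MV n, MV.IsGrade (h - p) a → MV.pair (MV.imul v a) β = 0) :
    ∀ w : Fin p → Euc n, (∀ i, w i ∈ MV.spanSet h v) → MV.pair (MV.wedgeFam w) β = 0 := by
  obtain ⟨q, rfl⟩ : ∃ q, p = q + 1 := ⟨p - 1, by omega⟩
  exact MV.pair_wedgeFam_eq_zero hgv (by omega) (fun x hx => hsimple.embed_wedge_eq_zero hx)
    fun a ha => by rw [← MV.pair_imul_left]; exact hyp a ha

/-- **Proposition 2.2.** Let `1 ≤ p ≤ h ≤ n`, let `v ∈ Λ_h(ℝⁿ) ∖ {0}` be simple and let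
`β ∈ Λ^p(ℝⁿ)` satisfy `⟨v ⌟ α; β⟩ = 0` for all `α ∈ Λ^{h-p}(ℝⁿ)`.  Then `β` vanishes on
`(span v)^p`, i.e. `β(w₁, …, w_p) = ⟨w₁ ∧ ⋯ ∧ w_p; β⟩ = 0` whenever `w₁, …, w_p ∈ span v`. -/
theorem statement1 {n h p : ℕ} (hp : 1 ≤ p) (hph : p ≤ h) (hhn : h ≤ n)
    (v : MV n) (hgv : MV.IsGrade h v) (hv0 : v ≠ 0) (hsimple : MV.IsSimple h v)
    (β : MV n) (hgβ : MV.IsGrade p β)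
    (hyp : ∀ a : MV n, MV.IsGrade (h - p) a → MV.pair (MV.imul v a) β = 0) :
    ∀ w : Fin p → Euc n, (∀ i, w i ∈ MV.spanSet h v) → MV.pair (MV.wedgeFam w) β = 0 :=
  statement1_general hp hph v hgv hsimple β hyp
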